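/- Let q be a real number with q > 0 and q ≠ 1, let k ≥ 1 and n be natural numbers, and let x_1, …, x_{k+1} be real numbers with Λ = x_1 x_2 ⋯ x_{k+1}. Then ∏_{i=1}^{n} (1 − Λ q^{i−1}) = Σ C_q(n; r_1,…,r_k) · [ ∏_{j=1}^{k} x_j^{n − s_j} · ∏_{i=1}^{r_j} (1 − x_j q^{i−1}) ] · ∏_{i=1}^{n − s_k} (1 − x_{k+1} q^{i−1}), where the sum is over all tuples (r_1,…,r_k) of natural numbers with r_1 + ⋯ + r_k ≤ n, and s_j = r_1 + ⋯ + r_j. -/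

import Mathlib

noncomputable def qNum (q : ℝ) (m : ℤ) : ℝ := (1 - q ^ m) / (1 - q)

noncomputable def qFactorial (q : ℝ) (n : ℕ) : ℝ :=
  ∏ i ∈ Finset.range n, qNum q ((i : ℤ) + 1)

noncomputable def qFacOrd (q : ℝ) (x : ℤ) (r : ℕ) : ℝ :=
  ∏ i ∈ Finset.range r, qNum q (x - (i : ℤ))

noncomputable def qMultinomial (q : ℝ) (x : ℤ) {k : ℕ} (r : Fin k → ℕ) : ℝ :=
  qFacOrd q x (∑ j, r j) / ∏ j, qFactorial q (r j)

/-!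
Induction on `k`. For two variables the formula is the `q`-binomial theorem
`(ab; q)_n = ∑_r [n, r]_q a^(n-r) (a; q)_r (b; q)_(n-r)`, which follows by induction on `n`
from the `q`-Pascal rule. Writing `Λ = x₁ · (x₂ ⋯ x_{k+1})` and expanding
`(x₂ ⋯ x_{k+1}; q)_(n-r₁)` by the induction hypothesis gives the general case, because
`C_q(n; r₁, r₂, …) = [n, r₁]_q C_q(n - r₁; r₂, …)`. Tuples with `r₁ + ⋯ + r_k > n` contribute
nothing, since `[n]_{s,q} = 0` for `s > n`; so all sums may run over a full box `{0, …, N}^k`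
with `n ≤ N`, which keeps the simplex constraint out of the induction.
-/

open Finset

/-- `(a; q)_n`, written `(1 ⊖ a)^n_q` in the paper. -/
noncomputable def qPochhammer (a q : ℝ) (n : ℕ) : ℝ :=
  ∏ i ∈ range n, (1 - a * q ^ i)

noncomputable def qBinom (q : ℝ) (x : ℤ) (r : ℕ) : ℝ :=
  qFacOrd q x r / qFactorial q r

section

variable {q : ℝ}

lemma qNum_natCast_ne_zero (hq : 0 < q) (hq1 : q ≠ 1) {m : ℕ} (hm : m ≠ 0) :
    qNum q m ≠ 0 := by
  rw [qNum, zpow_natCast]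
  exact div_ne_zero (sub_ne_zero.2 fun h => hq1 ((pow_eq_one_iff_of_nonneg hq.le hm).1 h.symm))
    (sub_ne_zero.2 hq1.symm)

lemma qNum_add_one (hq : q ≠ 0) (x : ℤ) (r : ℕ) :
    qNum q (x + 1) = q ^ (r + 1) * qNum q (x - r) + qNum q (r + 1) := by
  have hx : x + 1 = r + 1 + (x - r) := by ring
  simp only [qNum, hx, zpow_add₀ hq, zpow_natCast, zpow_one]
  ring

lemma qFactorial_succ (n : ℕ) : qFactorial q (n + 1) = qFactorial q n * qNum q (n + 1) := by
  rw [qFactorial, prod_range_succ]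
  rfl

lemma qFactorial_ne_zero (hq : 0 < q) (hq1 : q ≠ 1) (n : ℕ) : qFactorial q n ≠ 0 :=
  prod_ne_zero_iff.2 fun i _ => by exact_mod_cast qNum_natCast_ne_zero hq hq1 i.succ_ne_zero

lemma qFacOrd_succ (x : ℤ) (r : ℕ) : qFacOrd q x (r + 1) = qFacOrd q x r * qNum q (x - r) :=
  prod_range_succ _ _

lemma qFacOrd_add_one_succ (x : ℤ) (r : ℕ) :
    qFacOrd q (x + 1) (r + 1) = qNum q (x + 1) * qFacOrd q x r := by
  rw [qFacOrd, prod_range_succ', mul_comm]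
  simp only [qFacOrd, CharP.cast_eq_zero, sub_zero, Nat.cast_succ]
  congr 1
  exact prod_congr rfl fun i _ => by ring_nf

lemma qFacOrd_add (x : ℤ) (a b : ℕ) :
    qFacOrd q x (a + b) = qFacOrd q x a * qFacOrd q (x - a) b := by
  rw [qFacOrd, prod_range_add]
  congr 1
  exact prod_congr rfl fun i _ => by push_cast; ring_nf

lemma qFacOrd_eq_zero {n r : ℕ} (h : n < r) : qFacOrd q n r = 0 :=
  prod_eq_zero (mem_range.2 h) (by simp [qNum])

@[simp]
lemma qBinom_zero (x : ℤ) : qBinom q x 0 = 1 := by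
  simp [qBinom, qFacOrd, qFactorial]

lemma qBinom_eq_zero {n r : ℕ} (h : n < r) : qBinom q n r = 0 := by
  rw [qBinom, qFacOrd_eq_zero h, zero_div]

lemma qBinom_succ_succ (hq : 0 < q) (hq1 : q ≠ 1) (x : ℤ) (r : ℕ) :
    qBinom q (x + 1) (r + 1) = q ^ (r + 1) * qBinom q x (r + 1) + qBinom q x r := by
  have hfac := qFactorial_ne_zero hq hq1 r
  have hnum : qNum q (r + 1) ≠ 0 := by exact_mod_cast qNum_natCast_ne_zero hq hq1 r.succ_ne_zero
  rw [qBinom, qBinom, qBinom, qFacOrd_add_one_succ, qFacOrd_succ, qFactorial_succ,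
    qNum_add_one hq.ne' x r]
  field_simp

theorem qPochhammer_mul_eq_sum (hq : 0 < q) (hq1 : q ≠ 1) (a b : ℝ) (n : ℕ) :
    qPochhammer (a * b) q n = ∑ r ∈ range (n + 1),
      qBinom q n r * (a ^ (n - r) * qPochhammer a q r * qPochhammer b q (n - r)) := by
  set f : ℕ → ℕ → ℝ := fun n r => a ^ (n - r) * qPochhammer a q r * qPochhammer b q (n - r)
  induction n with
  | zero => simp [qPochhammer]
  | succ n ih =>
    have step : ∀ r ∈ range (n + 1),
        q ^ r * f (n + 1) r + f (n + 1) (r + 1) = f n r * (1 - a * b * q ^ n) := by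
      intro r hr
      obtain ⟨s, rfl⟩ := Nat.exists_eq_add_of_le (Nat.lt_succ_iff.1 (mem_range.1 hr))
      simp only [f, qPochhammer, prod_range_succ, show r + s + 1 - r = s + 1 by omega,
        show r + s + 1 - (r + 1) = s by omega, Nat.add_sub_cancel_left, pow_add]
      ring
    calc qPochhammer (a * b) q (n + 1)
        = (∑ r ∈ range (n + 1), qBinom q n r * f n r) * (1 - a * b * q ^ n) := by
          rw [qPochhammer, prod_range_succ, ← qPochhammer, ih]
      _ = ∑ r ∈ range (n + 1), q ^ r * qBinom q n r * f (n + 1) r +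
            ∑ r ∈ range (n + 1), qBinom q n r * f (n + 1) (r + 1) := by
          rw [sum_mul, ← sum_add_distrib]
          exact sum_congr rfl fun r hr => by rw [mul_assoc, ← step r hr]; ring
      _ = ∑ r ∈ range (n + 2), q ^ r * qBinom q n r * f (n + 1) r +
            ∑ r ∈ range (n + 1), qBinom q n r * f (n + 1) (r + 1) := by
          rw [sum_range_succ _ (n + 1), qBinom_eq_zero n.lt_succ_self, mul_zero, zero_mul,
            add_zero]
      _ = ∑ r ∈ range (n + 2), qBinom q (n + 1 : ℕ) r * f (n + 1) r := by
          rw [sum_range_succ', sum_range_succ' _ (n + 1), add_right_comm, ← sum_add_distrib]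
          push_cast
          simp only [qBinom_succ_succ hq hq1, qBinom_zero, add_mul, pow_zero, one_mul, mul_one]

lemma qMultinomial_cons {k : ℕ} (x : ℤ) (a : ℕ) (g : Fin k → ℕ) :
    qMultinomial q x (Fin.cons a g) = qBinom q x a * qMultinomial q (x - a) g := by
  rw [qMultinomial, qMultinomial, qBinom, Fin.sum_cons, qFacOrd_add, Fin.prod_univ_succ]
  simp only [Fin.cons_zero, Fin.cons_succ]
  rw [div_mul_div_comm]

lemma qMultinomial_eq_zero {k n : ℕ} {r : Fin k → ℕ} (h : n < ∑ j, r j) :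
    qMultinomial q n r = 0 := by
  rw [qMultinomial, qFacOrd_eq_zero h, zero_div]

end

section PartialSums

variable {M : Type*} [AddCommMonoid M] {k : ℕ}

lemma Fin.sum_filter_le_zero (f : Fin (k + 1) → M) :
    ∑ i ∈ univ.filter (fun i => i ≤ 0), f i = f 0 := by
  rw [sum_filter, Fin.sum_univ_succ]
  simp [Fin.succ_ne_zero]

lemma Fin.sum_filter_le_succ (f : Fin (k + 1) → M) (j : Fin k) :
    ∑ i ∈ univ.filter (fun i => i ≤ j.succ), f i =
      f 0 + ∑ i ∈ univ.filter (fun i => i ≤ j), f i.succ := by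
  rw [sum_filter, Fin.sum_univ_succ, sum_filter]
  simp [Fin.succ_le_succ_iff]

end PartialSums

noncomputable def qMultinomialTerm (q : ℝ) (n : ℕ) {k : ℕ} (x : Fin (k + 1) → ℝ)
    (r : Fin k → ℕ) : ℝ :=
  qMultinomial q (n : ℤ) r *
    (∏ j : Fin k, x j.castSucc ^ (n - ∑ i' ∈ Finset.univ.filter (fun i' => i' ≤ j), r i') *
      qPochhammer (x j.castSucc) q (r j)) *
    qPochhammer (x (Fin.last k)) q (n - ∑ j, r j)

lemma qMultinomialTerm_cons {q : ℝ} (n : ℕ) {k : ℕ} (x : Fin (k + 2) → ℝ) (a : ℕ)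
    (g : Fin k → ℕ) :
    qMultinomialTerm q n x (Fin.cons a g) = qBinom q n a *
      (x 0 ^ (n - a) * qPochhammer (x 0) q a * qMultinomialTerm q (n - a) (Fin.tail x) g) := by
  rcases lt_or_ge n a with ha | ha
  · simp [qMultinomialTerm, qMultinomial_cons, qBinom_eq_zero ha]
  have hcast : ((n - a : ℕ) : ℤ) = n - a := by omega
  simp only [qMultinomialTerm, qMultinomial_cons, hcast, Fin.prod_univ_succ, Fin.sum_cons,
    Fin.sum_filter_le_zero, Fin.sum_filter_le_succ, Fin.cons_zero, Fin.cons_succ,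
    Fin.castSucc_zero, Fin.succ_castSucc, ← Fin.succ_last, Fin.tail, Nat.sub_sub]
  ring

theorem qPochhammer_prod_eq_sum {q : ℝ} (hq : 0 < q) (hq1 : q ≠ 1) {k N n : ℕ} (hn : n ≤ N)
    (x : Fin (k + 1) → ℝ) :
    qPochhammer (∏ j, x j) q n = ∑ r : Fin k → Fin (N + 1), qMultinomialTerm q n x (r ·) := by
  induction k generalizing n with
  | zero => simp [qMultinomialTerm, qMultinomial, qFacOrd, Fin.last]
  | succ k ih =>
    calc qPochhammer (∏ j, x j) q n
        = ∑ a ∈ range (n + 1), qBinom q n a * (x 0 ^ (n - a) * qPochhammer (x 0) q a *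
            qPochhammer (∏ j, Fin.tail x j) q (n - a)) := by
          rw [Fin.prod_univ_succ, qPochhammer_mul_eq_sum hq hq1]
          rfl
      _ = ∑ a : Fin (N + 1), qBinom q n a * (x 0 ^ (n - a) * qPochhammer (x 0) q a *
            qPochhammer (∏ j, Fin.tail x j) q (n - a)) := by
          refine (sum_subset (range_subset_range.2 (by omega)) fun a _ ha => ?_).trans
            (Fin.sum_univ_eq_sum_range _ _).symm
          rw [qBinom_eq_zero (by simpa using ha), zero_mul]
      _ = ∑ a : Fin (N + 1), ∑ g : Fin k → Fin (N + 1),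
            qMultinomialTerm q n x (Fin.cons (a : ℕ) (g ·)) := by
          refine sum_congr rfl fun a _ => ?_
          rw [ih ((n.sub_le a).trans hn), mul_sum, mul_sum]
          simp only [qMultinomialTerm_cons]
      _ = ∑ r : Fin (k + 1) → Fin (N + 1), qMultinomialTerm q n x (r ·) := by
          rw [← (Fin.consEquiv fun _ => Fin (N + 1)).sum_comp, Fintype.sum_prod_type]
          refine sum_congr rfl fun a _ => sum_congr rfl fun g _ => ?_
          congr 1
          funext j
          refine Fin.cases ?_ (fun j => ?_) j <;> simp

theorem alt_qMultinomial_formula_general (q : ℝ) (hq : 0 < q) (hq1 : q ≠ 1)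
    (k n : ℕ) (x : Fin (k + 1) → ℝ) :
    ∏ i ∈ Finset.range n, (1 - (∏ j, x j) * q ^ i) =
      ∑ r ∈ Finset.univ.filter (fun r : Fin k → Fin (n + 1) => ∑ j, (r j : ℕ) ≤ n),
        qMultinomial q (n : ℤ) (fun j => (r j : ℕ)) *
          (∏ j : Fin k,
            x j.castSucc ^ (n - ∑ i' ∈ Finset.univ.filter (fun i' => i' ≤ j), (r i' : ℕ)) *
              ∏ i ∈ Finset.range (r j : ℕ), (1 - x j.castSucc * q ^ i)) *
          ∏ i ∈ Finset.range (n - ∑ j, (r j : ℕ)), (1 - x (Fin.last k) * q ^ i) := by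
  refine (qPochhammer_prod_eq_sum hq hq1 le_rfl x).trans (sum_filter_of_ne fun r _ hr => ?_).symm
  by_contra! h
  exact hr (by rw [qMultinomialTerm, qMultinomial_eq_zero h, zero_mul, zero_mul])

/-- Alternative q-multinomial formula: with Λ = x_1 ⋯ x_{k+1},
    ∏_{i=1}^n (1 − Λ q^(i−1)) =
    Σ_{r, Σr_j ≤ n} C_q(n; r) [∏_j x_j^(n−s_j) ∏_{i=1}^{r_j} (1 − x_j q^(i−1))]
      ∏_{i=1}^{n−s_k} (1 − x_{k+1} q^(i−1)). -/
theorem alt_qMultinomial_formula (q : ℝ) (hq : 0 < q) (hq1 : q ≠ 1)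
    (k n : ℕ) (hk : 1 ≤ k) (x : Fin (k + 1) → ℝ) :
    ∏ i ∈ Finset.range n, (1 - (∏ j, x j) * q ^ i) =
      ∑ r ∈ Finset.univ.filter (fun r : Fin k → Fin (n + 1) => ∑ j, (r j : ℕ) ≤ n),
        qMultinomial q (n : ℤ) (fun j => (r j : ℕ)) *
          (∏ j : Fin k,
            x j.castSucc ^ (n - ∑ i' ∈ Finset.univ.filter (fun i' => i' ≤ j), (r i' : ℕ)) *
              ∏ i ∈ Finset.range (r j : ℕ), (1 - x j.castSucc * q ^ i)) *
          ∏ i ∈ Finset.range (n - ∑ j, (r j : ℕ)), (1 - x (Fin.last k) * q ^ i) :=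
  alt_qMultinomial_formula_general q hq hq1 k n x
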